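/- Let n ≥ 1, d ≥ 1. There exists a constant c > 0 depending only on n and d such that: for every normalized polynomial P of degree d in ℂⁿ with H = {z : P(z) = 0}, every δ with 0 < δ < ρ(n,d) = 1/(4(16(d+n))^n), every v₁ ∈ Q with dist(v₁, H) = δ, and every closed ball B̂ ⊆ Q of radius ρ(n,d) every point of which is at distance at least 2ρ(n,d) from H, one has 1/|P(v₁)| ≥ (c/δ)·sup_{z ∈ B̂} 1/|P(z)|. In particular, the doubling constant of the function 1/P with respect to B̂ and the region {z ∈ Q : dist(z,H) ≥ δ} is at least c/δ. -/

import Mathlib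

/-!
Near the zero set `P` is small: its coefficients have total modulus 1, so `P` is Lipschitz with
constant `d 3^d` where all coordinates have modulus at most 3, and it vanishes at the point of `H`
nearest to `v₁`; hence `|P(v₁)| ≤ d 3^d δ`.

Away from the zero set `P` is uniformly large. Evaluation on the grid `{0, …, d}ⁿ` is injective on
polynomials of degree at most `d` in each variable (combinatorial Nullstellensatz), so by
finite-dimensionality some grid point `z₀` has `|P(z₀)| ≥ c₀ ‖P‖`. On the complex line through `z`
and `z₀`, `P` restricts to a one-variable polynomial of degree at most `d` whose roots all lie at
distance at least `2ρ` from `z`; comparing the root factorisations at `z` and `z₀` gives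
`|P(z)| ≥ (2ρ / (2ρ + R))^d |P(z₀)|`, where `R = √n (d + 2)` bounds `|z - z₀|`.
-/

noncomputable section

def unitCube (n : ℕ) : Set (EuclideanSpace ℂ (Fin n)) :=
  {z | ∀ i, (z i).re ∈ Set.Icc (0:ℝ) 1 ∧ (z i).im ∈ Set.Icc (0:ℝ) 1}

def mvNorm {n : ℕ} (P : MvPolynomial (Fin n) ℂ) : ℝ :=
  ∑ α ∈ P.support, ‖P.coeff α‖

def zeroSet {n : ℕ} (P : MvPolynomial (Fin n) ℂ) : Set (EuclideanSpace ℂ (Fin n)) :=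
  {z | MvPolynomial.eval (fun i => z i) P = 0}

def Qr (n : ℕ) (H : Set (EuclideanSpace ℂ (Fin n))) (r : ℝ) : Set (EuclideanSpace ℂ (Fin n)) :=
  unitCube n \ {z | Metric.infDist z H ≤ r}

def polyNorm (p : Polynomial ℂ) : ℝ := ∑ k ∈ p.support, ‖p.coeff k‖

def lineRestrict {n : ℕ} (P : MvPolynomial (Fin n) ℂ) (b w : EuclideanSpace ℂ (Fin n)) :
    Polynomial ℂ :=
  MvPolynomial.aeval (fun i => Polynomial.C (b i) + Polynomial.C (w i) * Polynomial.X) P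

def lineSet {n : ℕ} (b w : EuclideanSpace ℂ (Fin n)) : Set (EuclideanSpace ℂ (Fin n)) :=
  {z | ∃ t : ℂ, z = b + t • w}

open MvPolynomial

section Grid

variable {n d : ℕ}

/- Coefficient vectors of polynomials of degree at most `d` in each variable are indexed by the box
`Fin n → Fin (d + 1)`, and the same box indexes the interpolation grid `{0, …, d}ⁿ`. -/
def boxExponent (e : Fin n → Fin (d + 1)) : Fin n →₀ ℕ :=
  Finsupp.equivFunOnFinite.symm fun i => e i

def gridPoint (g : Fin n → Fin (d + 1)) : Fin n → ℂ := fun i => ((g i : ℕ) : ℂ)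

theorem boxExponent_injective : Function.Injective (boxExponent (n := n) (d := d)) := by
  intro e e' h
  funext i
  exact Fin.ext (DFunLike.congr_fun h i)

theorem exists_boxExponent_eq {α : Fin n →₀ ℕ} (h : ∀ i, α i ≤ d) :
    ∃ e : Fin n → Fin (d + 1), boxExponent e = α :=
  ⟨fun i => ⟨α i, Nat.lt_succ_of_le (h i)⟩, by ext; simp [boxExponent]⟩

variable (n d) in
def ofBoxCoeffs : ((Fin n → Fin (d + 1)) → ℂ) →ₗ[ℂ] MvPolynomial (Fin n) ℂ :=
  ∑ e, (monomial (boxExponent e)).comp (LinearMap.proj e)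

theorem ofBoxCoeffs_apply (c : (Fin n → Fin (d + 1)) → ℂ) :
    ofBoxCoeffs n d c = ∑ e, monomial (boxExponent e) (c e) := by
  simp [ofBoxCoeffs]

theorem coeff_boxExponent_ofBoxCoeffs (c : (Fin n → Fin (d + 1)) → ℂ)
    (e : Fin n → Fin (d + 1)) : coeff (boxExponent e) (ofBoxCoeffs n d c) = c e := by
  simp [ofBoxCoeffs_apply, coeff_sum, coeff_monomial, boxExponent_injective.eq_iff]

theorem ofBoxCoeffs_mem_restrictDegree (c : (Fin n → Fin (d + 1)) → ℂ) :
    ofBoxCoeffs n d c ∈ restrictDegree (Fin n) ℂ d := by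
  rw [ofBoxCoeffs_apply]
  refine Submodule.sum_mem _ fun e _ => (mem_restrictDegree _ _ _).mpr fun α hα i => ?_
  rw [Finset.mem_singleton.mp (support_monomial_subset hα)]
  simpa [boxExponent] using Nat.lt_succ_iff.mp (e i).isLt

theorem coeff_eq_zero_of_mem_restrictDegree {P : MvPolynomial (Fin n) ℂ}
    (hP : P ∈ restrictDegree (Fin n) ℂ d) {α : Fin n →₀ ℕ} (hα : ¬ ∀ i, α i ≤ d) :
    coeff α P = 0 :=
  notMem_support_iff.mp fun h => hα ((mem_restrictDegree _ _ _).mp hP α h)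

theorem ofBoxCoeffs_coeff_boxExponent {P : MvPolynomial (Fin n) ℂ}
    (hP : P ∈ restrictDegree (Fin n) ℂ d) :
    ofBoxCoeffs n d (fun e => coeff (boxExponent e) P) = P := by
  ext α
  by_cases hα : ∀ i, α i ≤ d
  · obtain ⟨e, rfl⟩ := exists_boxExponent_eq hα
    exact coeff_boxExponent_ofBoxCoeffs _ e
  · rw [coeff_eq_zero_of_mem_restrictDegree hP hα,
      coeff_eq_zero_of_mem_restrictDegree (ofBoxCoeffs_mem_restrictDegree _) hα]

theorem mvNorm_eq_sum_boxExponent {P : MvPolynomial (Fin n) ℂ}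
    (hP : P ∈ restrictDegree (Fin n) ℂ d) :
    mvNorm P = ∑ e : Fin n → Fin (d + 1), ‖coeff (boxExponent e) P‖ := by
  rw [mvNorm, ← Finset.sum_image (f := fun α => ‖coeff α P‖)
    fun e _ e' _ h => boxExponent_injective h]
  refine Finset.sum_subset (fun α hα => ?_) fun α _ hα => by simp [notMem_support_iff.mp hα]
  obtain ⟨e, rfl⟩ := exists_boxExponent_eq ((mem_restrictDegree _ _ _).mp hP α hα)
  exact Finset.mem_image_of_mem _ (Finset.mem_univ e)

theorem norm_gridPoint_le (g : Fin n → Fin (d + 1)) (i : Fin n) : ‖gridPoint g i‖ ≤ d := by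
  simpa [gridPoint] using Nat.lt_succ_iff.mp (g i).isLt

theorem eq_zero_of_eval_gridPoint_eq_zero {P : MvPolynomial (Fin n) ℂ}
    (hP : P ∈ restrictDegree (Fin n) ℂ d)
    (h : ∀ g : Fin n → Fin (d + 1), eval (gridPoint g) P = 0) : P = 0 := by
  set S : Finset ℂ := Finset.univ.image fun k : Fin (d + 1) => ((k : ℕ) : ℂ)
  refine eq_zero_of_eval_zero_at_prod_finset P (fun _ => S) (fun i => ?_) fun x hx => ?_
  · have hS : S.card = d + 1 := by
      rw [Finset.card_image_of_injective _ fun k k' h => Fin.ext (Nat.cast_injective h)]; simp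
    rw [hS, Nat.lt_succ_iff, degreeOf_le_iff]
    exact fun α hα => (mem_restrictDegree _ _ _).mp hP α hα i
  · choose g _ hg using fun i => Finset.mem_image.mp (hx i)
    rw [show x = gridPoint g from funext fun i => (hg i).symm]
    exact h g

variable (n d) in
def gridEval : ((Fin n → Fin (d + 1)) → ℂ) →ₗ[ℂ] ((Fin n → Fin (d + 1)) → ℂ) :=
  LinearMap.pi (fun g => (aeval (gridPoint g)).toLinearMap) ∘ₗ ofBoxCoeffs n d

theorem gridEval_apply (c : (Fin n → Fin (d + 1)) → ℂ) (g : Fin n → Fin (d + 1)) :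
    gridEval n d c g = eval (gridPoint g) (ofBoxCoeffs n d c) :=
  rfl

theorem gridEval_injective : Function.Injective (gridEval n d) := by
  refine (injective_iff_map_eq_zero _).mpr fun c hc => funext fun e => ?_
  have h0 : ofBoxCoeffs n d c = 0 :=
    eq_zero_of_eval_gridPoint_eq_zero (ofBoxCoeffs_mem_restrictDegree c) (congrFun hc)
  rw [← coeff_boxExponent_ofBoxCoeffs c e, h0, coeff_zero, Pi.zero_apply]

variable (n d) in
theorem exists_pos_mul_mvNorm_le_norm_eval_gridPoint :
    ∃ C > 0, ∀ P ∈ restrictDegree (Fin n) ℂ d,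
      ∃ g : Fin n → Fin (d + 1), C * mvNorm P ≤ ‖eval (gridPoint g) P‖ := by
  obtain ⟨K, hK, hanti⟩ :=
    (gridEval n d).exists_antilipschitzWith (LinearMap.ker_eq_bot.mpr gridEval_injective)
  set N : ℝ := ↑(Fintype.card (Fin n → Fin (d + 1)))
  have hN : 0 < N := Nat.cast_pos.mpr Fintype.card_pos
  refine ⟨1 / (N * K), by positivity, fun P hP => ?_⟩
  set c : (Fin n → Fin (d + 1)) → ℂ := fun e => coeff (boxExponent e) P
  obtain ⟨g, hg⟩ := Finite.exists_max fun g => ‖gridEval n d c g‖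
  have hgP : gridEval n d c g = eval (gridPoint g) P := by
    rw [gridEval_apply, ofBoxCoeffs_coeff_boxExponent hP]
  have hmv : mvNorm P ≤ N * ‖c‖ := by
    rw [mvNorm_eq_sum_boxExponent hP]
    calc ∑ e, ‖c e‖ ≤ ∑ _e : Fin n → Fin (d + 1), ‖c‖ :=
          Finset.sum_le_sum fun e _ => norm_le_pi_norm c e
      _ = N * ‖c‖ := by simp [N]
  have hc : ‖c‖ ≤ K * ‖gridEval n d c‖ := ZeroHomClass.bound_of_antilipschitz _ hanti c
  have hmax : ‖gridEval n d c‖ ≤ ‖eval (gridPoint g) P‖ :=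
    hgP ▸ (pi_norm_le_iff_of_nonneg (norm_nonneg _)).mpr hg
  refine ⟨g, ?_⟩
  rw [div_mul_eq_mul_div, one_mul, div_le_iff₀ (by positivity)]
  calc mvNorm P ≤ N * (K * ‖eval (gridPoint g) P‖) :=
        hmv.trans (by gcongr; exact hc.trans (by gcongr))
    _ = _ := by ring

end Grid

theorem Multiset.norm_prod_map_sub_prod_map_le {ι R : Type*} [SeminormedCommRing R]
    [NormOneClass R] {f g : ι → R} {M δ : ℝ} (hM : 1 ≤ M) (hδ : 0 ≤ δ) (hf : ∀ i, ‖f i‖ ≤ M)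
    (hg : ∀ i, ‖g i‖ ≤ M) (hfg : ∀ i, ‖f i - g i‖ ≤ δ) (s : Multiset ι) :
    ‖(s.map f).prod - (s.map g).prod‖ ≤ Multiset.card s * M ^ Multiset.card s * δ := by
  have hprod (t : Multiset ι) : ‖(t.map g).prod‖ ≤ M ^ Multiset.card t := by
    induction t using Multiset.induction_on with
    | empty => simp
    | cons j t ih =>
      simpa [pow_succ'] using
        (norm_mul_le _ _).trans (mul_le_mul (hg j) ih (norm_nonneg _) (by positivity))
  induction s using Multiset.induction_on with
  | empty => simp
  | cons i s ih =>
    have hgs := hprod s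
    have hMs : δ * M ^ Multiset.card s ≤ δ * (M ^ Multiset.card s * M) := by
      rw [← pow_succ]; exact mul_le_mul_of_nonneg_left (pow_le_pow_right₀ hM (by omega)) hδ
    simp only [Multiset.map_cons, Multiset.prod_cons, Multiset.card_cons, Nat.cast_add,
      Nat.cast_one]
    calc ‖f i * (s.map f).prod - g i * (s.map g).prod‖
        = ‖f i * ((s.map f).prod - (s.map g).prod) + (f i - g i) * (s.map g).prod‖ := by
          ring_nf
      _ ≤ M * (Multiset.card s * M ^ Multiset.card s * δ) + δ * M ^ Multiset.card s := by
        refine (norm_add_le _ _).trans (add_le_add ?_ ?_) <;> refine (norm_mul_le _ _).trans ?_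
        · gcongr; exact hf i
        · gcongr; exact hfg i
      _ ≤ _ := by rw [pow_succ]; linarith

theorem Finsupp.prod_pow_eq_prod_map_toMultiset {σ R : Type*} [CommMonoid R] (x : σ → R)
    (α : σ →₀ ℕ) : α.prod (fun i k => x i ^ k) = (α.toMultiset.map x).prod := by
  rw [Finsupp.toMultiset_map, Finsupp.prod_toMultiset,
    Finsupp.prod_mapDomain_index pow_zero pow_add]

theorem norm_eval_sub_eval_le {n d : ℕ} {P : MvPolynomial (Fin n) ℂ} (hP : P.totalDegree ≤ d)
    {M δ : ℝ} (hM : 1 ≤ M) (hδ : 0 ≤ δ) {x y : Fin n → ℂ} (hx : ∀ i, ‖x i‖ ≤ M)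
    (hy : ∀ i, ‖y i‖ ≤ M) (hxy : ∀ i, ‖x i - y i‖ ≤ δ) :
    ‖eval x P - eval y P‖ ≤ mvNorm P * (d * M ^ d * δ) := by
  rw [eval_eq, eval_eq, ← Finset.sum_sub_distrib, mvNorm, Finset.sum_mul]
  refine (norm_sum_le _ _).trans (Finset.sum_le_sum fun α hα => ?_)
  rw [← mul_sub, norm_mul]
  gcongr
  have hdeg : Multiset.card α.toMultiset ≤ d := by
    rw [Finsupp.card_toMultiset]; exact (le_totalDegree hα).trans hP
  calc ‖α.prod (fun i k => x i ^ k) - α.prod (fun i k => y i ^ k)‖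
      ≤ Multiset.card α.toMultiset * M ^ Multiset.card α.toMultiset * δ := by
        simp only [Finsupp.prod_pow_eq_prod_map_toMultiset]
        exact Multiset.norm_prod_map_sub_prod_map_le hM hδ hx hy hxy _
    _ ≤ d * M ^ d * δ := by gcongr

theorem div_mul_norm_sub_le_norm_sub {E : Type*} [SeminormedAddCommGroup E] {a b t : E} {r : ℝ}
    (hr : 0 ≤ r) (ht : r ≤ ‖a - t‖) : r / (r + ‖b - a‖) * ‖b - t‖ ≤ ‖a - t‖ := by
  rcases (add_nonneg hr (norm_nonneg (b - a))).eq_or_lt with h | h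
  · simp [← h]
  rw [div_mul_eq_mul_div, div_le_iff₀ h]
  calc r * ‖b - t‖ ≤ r * (‖b - a‖ + ‖a - t‖) := by
        gcongr; exact norm_sub_le_norm_sub_add_norm_sub b a t
    _ ≤ ‖a - t‖ * (r + ‖b - a‖) := by nlinarith [norm_nonneg (b - a)]

theorem Polynomial.pow_natDegree_mul_norm_eval_le {q : Polynomial ℂ} {a b : ℂ} {r : ℝ} (hr : 0 ≤ r)
    (hroots : ∀ t ∈ q.roots, r ≤ ‖a - t‖) :
    (r / (r + ‖b - a‖)) ^ q.natDegree * ‖q.eval b‖ ≤ ‖q.eval a‖ := by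
  have hnorm (s : Multiset ℂ) : ‖s.prod‖ = (s.map (‖·‖)).prod :=
    map_multiset_prod (normHom : ℂ →*₀ ℝ) s
  have hq := IsAlgClosed.splits q
  rw [hq.eval_eq_prod_roots, hq.eval_eq_prod_roots, hq.natDegree_eq_card_roots, norm_mul,
    norm_mul, mul_left_comm, hnorm, hnorm, ← Multiset.prod_replicate,
    ← Multiset.map_const', Multiset.map_map, Multiset.map_map, ← Multiset.prod_map_mul]
  gcongr
  exact Multiset.prod_map_le_prod_map₀ _ _
    (fun t _ => by dsimp only [Function.comp]; positivity)
    fun t ht => div_mul_norm_sub_le_norm_sub hr (hroots t ht)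

theorem lineRestrict_eval {n : ℕ} (P : MvPolynomial (Fin n) ℂ) (b w : EuclideanSpace ℂ (Fin n))
    (t : ℂ) : (lineRestrict P b w).eval t = eval (fun i => (b + t • w) i) P := by
  rw [lineRestrict, ← Polynomial.coe_aeval_eq_eval, ← AlgHom.comp_apply, comp_aeval]
  simp only [map_add, map_mul, Polynomial.aeval_C, Polynomial.aeval_X, Algebra.algebraMap_self,
    RingHom.id_apply]
  change eval _ P = _
  congr 2
  funext i
  simp [mul_comm]

theorem natDegree_lineRestrict_le {n : ℕ} (P : MvPolynomial (Fin n) ℂ)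
    (b w : EuclideanSpace ℂ (Fin n)) : (lineRestrict P b w).natDegree ≤ P.totalDegree := by
  rw [lineRestrict, aeval_def, eval₂_eq']
  refine Polynomial.natDegree_sum_le_of_forall_le _ _ fun α hα => ?_
  have hlin (i : Fin n) :
      (Polynomial.C (b i) + Polynomial.C (w i) * Polynomial.X).natDegree ≤ 1 := by
    rw [add_comm]; exact Polynomial.natDegree_linear_le
  calc _ ≤ ∑ i, (α i * 1) := by
        refine (Polynomial.natDegree_C_mul_le _ _).trans <|
          (Polynomial.natDegree_prod_le _ _).trans ?_
        exact Finset.sum_le_sum fun i _ => Polynomial.natDegree_pow_le_of_le _ (hlin i)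
    _ ≤ P.totalDegree := by
        simpa [Finsupp.sum_fintype] using le_totalDegree hα

theorem pow_mul_norm_eval_le_of_le_infDist {n d : ℕ} {P : MvPolynomial (Fin n) ℂ}
    (hP : P.totalDegree ≤ d) {z z' : EuclideanSpace ℂ (Fin n)} {s D : ℝ} (hs : 0 ≤ s)
    (hsz : s ≤ Metric.infDist z (zeroSet P)) (hD : dist z' z ≤ D) :
    (s / (s + D)) ^ d * ‖eval (fun i => z' i) P‖ ≤ ‖eval (fun i => z i) P‖ := by
  have hD0 : 0 ≤ D := dist_nonneg.trans hD
  have hratio : s / (s + D) ≤ 1 := div_le_one_of_le₀ (by linarith) (by positivity)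
  set w := z' - z
  rcases eq_or_ne w 0 with hw | hw
  · rw [sub_eq_zero.mp hw]
    exact mul_le_of_le_one_left (norm_nonneg _) (pow_le_one₀ (by positivity) hratio)
  have hw : 0 < ‖w‖ := norm_pos_iff.mpr hw
  set q := lineRestrict P z w
  have hroots : ∀ t ∈ q.roots, s / ‖w‖ ≤ ‖0 - t‖ := by
    intro t ht
    have hzero : z + t • w ∈ zeroSet P :=
      (lineRestrict_eval P z w t).symm.trans (Polynomial.mem_roots'.mp ht).2
    rw [div_le_iff₀ hw, zero_sub, norm_neg, ← norm_smul]
    calc s ≤ Metric.infDist z (zeroSet P) := hsz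
      _ ≤ dist z (z + t • w) := Metric.infDist_le_dist_of_mem hzero
      _ = ‖t • w‖ := by rw [dist_self_add_right]
  have key := Polynomial.pow_natDegree_mul_norm_eval_le (b := 1) (div_nonneg hs hw.le) hroots
  have hq0 : q.eval 0 = eval (fun i => z i) P := by rw [lineRestrict_eval, zero_smul, add_zero]
  have hq1 : q.eval 1 = eval (fun i => z' i) P := by
    rw [lineRestrict_eval, one_smul, add_sub_cancel]
  have hrescale : s / ‖w‖ / (s / ‖w‖ + ‖(1 : ℂ) - 0‖) = s / (s + ‖w‖) := by
    rw [sub_zero, norm_one]; field_simp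
  rw [hq0, hq1, hrescale] at key
  refine le_trans ?_ key
  gcongr ?_ * _
  calc (s / (s + D)) ^ d ≤ (s / (s + D)) ^ q.natDegree :=
        pow_le_pow_of_le_one (by positivity) hratio ((natDegree_lineRestrict_le P z w).trans hP)
    _ ≤ (s / (s + ‖w‖)) ^ q.natDegree := by
        gcongr
        rw [← dist_eq_norm]; exact hD

theorem norm_le_two_of_mem_unitCube {n : ℕ} {z : EuclideanSpace ℂ (Fin n)} (hz : z ∈ unitCube n)
    (i : Fin n) : ‖z i‖ ≤ 2 := by
  obtain ⟨⟨hre, hre'⟩, him, him'⟩ := hz i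
  calc ‖z i‖ ≤ |(z i).re| + |(z i).im| := Complex.norm_le_abs_re_add_abs_im _
    _ ≤ 2 := by rw [abs_of_nonneg hre, abs_of_nonneg him]; linarith

theorem isClosed_zeroSet {n : ℕ} (P : MvPolynomial (Fin n) ℂ) : IsClosed (zeroSet P) :=
  isClosed_eq ((continuous_eval P).comp (PiLp.continuous_ofLp 2 _)) continuous_const

theorem EuclideanSpace.dist_le_sqrt_card_mul {ι 𝕜 : Type*} [Fintype ι] [RCLike 𝕜]
    {x y : EuclideanSpace 𝕜 ι} {C : ℝ} (hC : 0 ≤ C) (h : ∀ i, dist (x i) (y i) ≤ C) :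
    dist x y ≤ √(Fintype.card ι) * C := by
  rw [EuclideanSpace.dist_eq, ← Real.sqrt_sq hC, ← Real.sqrt_mul (Nat.cast_nonneg _)]
  gcongr
  calc ∑ i, dist (x i) (y i) ^ 2 ≤ ∑ _i : ι, C ^ 2 :=
        Finset.sum_le_sum fun i _ => pow_le_pow_left₀ dist_nonneg (h i) 2
    _ = Fintype.card ι * C ^ 2 := by simp

theorem norm_eval_le_mul_infDist {n d : ℕ} {P : MvPolynomial (Fin n) ℂ} (hP : P.totalDegree ≤ d)
    {v : EuclideanSpace ℂ (Fin n)} (hv : v ∈ unitCube n) (hH : (zeroSet P).Nonempty)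
    (h1 : Metric.infDist v (zeroSet P) ≤ 1) :
    ‖eval (fun i => v i) P‖ ≤ mvNorm P * (d * 3 ^ d * Metric.infDist v (zeroSet P)) := by
  obtain ⟨u, hu, hvu⟩ := (isClosed_zeroSet P).exists_infDist_eq_dist hH v
  have hcoord (i : Fin n) : ‖v i - u i‖ ≤ Metric.infDist v (zeroSet P) := by
    rw [hvu, ← dist_eq_norm]; exact PiLp.dist_apply_le v u i
  have hv3 (i : Fin n) : ‖v i‖ ≤ 3 := by linarith [norm_le_two_of_mem_unitCube hv i]
  have hu3 (i : Fin n) : ‖u i‖ ≤ 3 := by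
    linarith [norm_le_norm_add_norm_sub (v i) (u i), hcoord i, norm_le_two_of_mem_unitCube hv i]
  have key := norm_eval_sub_eval_le hP (by norm_num) Metric.infDist_nonneg hv3 hu3 hcoord
  rwa [show eval (fun i => u i) P = 0 from hu, sub_zero] at key

theorem exists_pos_mul_mvNorm_le_norm_eval_of_le_infDist (n d : ℕ) {s : ℝ} (hs : 0 < s) :
    ∃ C > 0, ∀ P : MvPolynomial (Fin n) ℂ, P.totalDegree ≤ d → ∀ z ∈ unitCube n,
      s ≤ Metric.infDist z (zeroSet P) → C * mvNorm P ≤ ‖eval (fun i => z i) P‖ := by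
  obtain ⟨C, hC, hgrid⟩ := exists_pos_mul_mvNorm_le_norm_eval_gridPoint n d
  set R : ℝ := √n * (d + 2)
  refine ⟨(s / (s + R)) ^ d * C, by positivity, fun P hP z hz hsz => ?_⟩
  obtain ⟨g, hg⟩ := hgrid P <| restrictTotalDegree_le_restrictDegree _ _ _ <|
    (mem_restrictTotalDegree _ _ _).mpr hP
  have hdist : dist (WithLp.toLp 2 (gridPoint g)) z ≤ R := by
    refine (EuclideanSpace.dist_le_sqrt_card_mul (C := d + 2) (by positivity) fun i => ?_).trans
      (by simp [R])
    rw [dist_eq_norm, PiLp.toLp_apply]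
    calc ‖gridPoint g i - z i‖ ≤ ‖gridPoint g i‖ + ‖z i‖ := norm_sub_le _ _
      _ ≤ d + 2 := add_le_add (norm_gridPoint_le g i) (norm_le_two_of_mem_unitCube hz i)
  have hline := pow_mul_norm_eval_le_of_le_infDist hP hs.le hsz hdist
  calc (s / (s + R)) ^ d * C * mvNorm P ≤ (s / (s + R)) ^ d * ‖eval (gridPoint g) P‖ := by
        rw [mul_assoc]; gcongr
    _ ≤ _ := hline

theorem stmt16_general (n d : ℕ) (hd : 1 ≤ d) :
    ∃ c : ℝ, 0 < c ∧
      ∀ P : MvPolynomial (Fin n) ℂ, P.totalDegree = d → mvNorm P = 1 →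
        ∀ δ : ℝ, 0 < δ → δ < 1 / (4 * (16 * ((d : ℝ) + n)) ^ n) →
          ∀ v₁ ∈ unitCube n, Metric.infDist v₁ (zeroSet P) = δ →
            ∀ x : EuclideanSpace ℂ (Fin n),
              Metric.closedBall x (1 / (4 * (16 * ((d : ℝ) + n)) ^ n)) ⊆ unitCube n →
              (∀ y ∈ Metric.closedBall x (1 / (4 * (16 * ((d : ℝ) + n)) ^ n)),
                2 * (1 / (4 * (16 * ((d : ℝ) + n)) ^ n)) ≤ Metric.infDist y (zeroSet P)) →
              ∀ z ∈ Metric.closedBall x (1 / (4 * (16 * ((d : ℝ) + n)) ^ n)),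
                c / δ * (1 / ‖MvPolynomial.eval (fun i => z i) P‖) ≤
                  1 / ‖MvPolynomial.eval (fun i => v₁ i) P‖ := by
  set ρ : ℝ := 1 / (4 * (16 * ((d : ℝ) + n)) ^ n)
  have hbase : 1 ≤ 16 * ((d : ℝ) + n) := by
    have : (1 : ℝ) ≤ d := by exact_mod_cast hd
    linarith [(n.cast_nonneg : (0 : ℝ) ≤ n)]
  have hρ : 0 < ρ := by positivity
  have hρ1 : ρ ≤ 1 := by
    have := one_le_pow₀ (n := n) hbase
    exact div_le_one_of_le₀ (by linarith) (by positivity)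
  obtain ⟨C, hC, hlow⟩ :=
    exists_pos_mul_mvNorm_le_norm_eval_of_le_infDist n d (by positivity : 0 < 2 * ρ)
  refine ⟨C / (d * 3 ^ d), by positivity, ?_⟩
  intro P hPd hP1 δ hδ hδρ v₁ hv₁ hv₁δ x hxQ hxH z hz
  have hH : (zeroSet P).Nonempty := Set.nonempty_iff_ne_empty.mpr fun h => by
    rw [h, Metric.infDist_empty] at hv₁δ; linarith
  have hv₁P : 0 < ‖eval (fun i => v₁ i) P‖ := norm_pos_iff.mpr fun h => by
    rw [Metric.infDist_zero_of_mem (show v₁ ∈ zeroSet P from h)] at hv₁δ; linarith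
  have hup := norm_eval_le_mul_infDist hPd.le hv₁ hH (by linarith)
  rw [hP1, hv₁δ, one_mul] at hup
  have hzP : C ≤ ‖eval (fun i => z i) P‖ := by
    simpa [hP1] using hlow P hPd.le z (hxQ hz) (hxH z hz)
  calc C / (d * 3 ^ d) / δ * (1 / ‖eval (fun i => z i) P‖)
        ≤ C / (d * 3 ^ d) / δ * (1 / C) := by gcongr
    _ = 1 / (d * 3 ^ d * δ) := by field_simp
    _ ≤ 1 / ‖eval (fun i => v₁ i) P‖ := by gcongr

theorem stmt16 (n d : ℕ) (hn : 1 ≤ n) (hd : 1 ≤ d) :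
    ∃ c : ℝ, 0 < c ∧
      ∀ P : MvPolynomial (Fin n) ℂ, P.totalDegree = d → mvNorm P = 1 →
        ∀ δ : ℝ, 0 < δ → δ < 1 / (4 * (16 * ((d : ℝ) + n)) ^ n) →
          ∀ v₁ ∈ unitCube n, Metric.infDist v₁ (zeroSet P) = δ →
            ∀ x : EuclideanSpace ℂ (Fin n),
              Metric.closedBall x (1 / (4 * (16 * ((d : ℝ) + n)) ^ n)) ⊆ unitCube n →
              (∀ y ∈ Metric.closedBall x (1 / (4 * (16 * ((d : ℝ) + n)) ^ n)),
                2 * (1 / (4 * (16 * ((d : ℝ) + n)) ^ n)) ≤ Metric.infDist y (zeroSet P)) →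
              ∀ z ∈ Metric.closedBall x (1 / (4 * (16 * ((d : ℝ) + n)) ^ n)),
                c / δ * (1 / ‖MvPolynomial.eval (fun i => z i) P‖) ≤
                  1 / ‖MvPolynomial.eval (fun i => v₁ i) P‖ :=
  stmt16_general n d hd
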